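/- Let Γ be an n-space group whose center Z(Γ) is trivial, and let N_E(Γ) be the normalizer of Γ in Isom(E^n). Then Γ has finite index in N_E(Γ), and N_E(Γ) is itself an n-space group, i.e. the action of N_E(Γ) on E^n is properly discontinuous and cocompact. -/

import Mathlib

noncomputable section

abbrev Euc (n : ℕ) : Type := EuclideanSpace ℝ (Fin n)

abbrev AffG (n : ℕ) : Type := Euc n ≃ᵃ[ℝ] Euc n

/-- The translation `x ↦ a + x` as an affinity of `Eⁿ`. -/
def transl {n : ℕ} (a : Euc n) : AffG n := AffineEquiv.constVAdd ℝ (Euc n) a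

/-- `Span(H)` : the linear span of the translation vectors of `H`. -/
def spanOf {n : ℕ} (H : Subgroup (AffG n)) : Submodule ℝ (Euc n) :=
  Submodule.span ℝ {a : Euc n | transl a ∈ H}

/-- An `n`-space group: a group of isometries acting properly discontinuously
and cocompactly on `Eⁿ`. -/
def IsSpaceGroup {n : ℕ} (Γ : Subgroup (AffG n)) : Prop :=
  (∀ f ∈ Γ, Isometry (⇑f)) ∧
  (∀ K : Set (Euc n), IsCompact K →
    {γ : AffG n | γ ∈ Γ ∧ ((⇑γ '' K) ∩ K).Nonempty}.Finite) ∧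
  (∃ K : Set (Euc n), IsCompact K ∧ ∀ x : Euc n, ∃ γ ∈ Γ, γ x ∈ K)

/-- `N` is a complete normal subgroup of `Γ`:  it is normal in `Γ` and
equals `{a+A ∈ Γ : a ∈ V ∧ V^⊥ ⊆ Fix A}` where `V = Span N`
(for `f = a + A` we have `a = f 0` and `A = f.linear`). -/
def IsCompleteNormal {n : ℕ} (N Γ : Subgroup (AffG n)) : Prop :=
  N ≤ Γ ∧ (∀ γ ∈ Γ, ∀ ν ∈ N, γ * ν * γ⁻¹ ∈ N) ∧
  (∀ f : AffG n, f ∈ N ↔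
    f ∈ Γ ∧ f 0 ∈ spanOf N ∧ ∀ x ∈ (spanOf N)ᗮ, f.linear x = x)

/-- Membership in the kernel `K = {b+B ∈ Γ : b ∈ V^⊥ ∧ V ⊆ Fix B}`
of the action of `Γ` on `V`. -/
def InKernel {n : ℕ} (Γ : Subgroup (AffG n)) (V : Submodule ℝ (Euc n)) (f : AffG n) : Prop :=
  f ∈ Γ ∧ f 0 ∈ Vᗮ ∧ ∀ x ∈ V, f.linear x = x

end

/-!
Measure how far an isometry `γ = a + A` is from the identity by `max ‖a‖ ‖A - 1‖`, the distance
from `toProd γ` to `toProd 1`; this distance is left invariant.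

If `h ∈ N_E(Γ)` is close to the identity, its commutators with the elements of `Γ` of bounded
translation part, which generate `Γ`, are elements of `Γ` close to the identity, hence trivial.
So `h` centralizes `Γ`, and cocompactness makes it a translation by a vector `c` fixed by all
linear parts of `Γ`. The translations of `Γ` span `Eⁿ`, so some translation `t ∈ Γ` has
`⟪t, c⟫ ≠ 0`, and the sum of the finite orbit of `t` under the linear parts of `Γ` is a central
translation of `Γ`, nonzero unless `c = 0`. Hence `N_E(Γ)` is discrete: it acts properly
discontinuously, and since every coset of `Γ` has a representative moving `0` a bounded distance,
`Γ` has finite index in it.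

That the translations span is Bieberbach's argument. Elements of `Γ` with linear parts within `1/8`
of `1` have commuting linear parts: their iterated commutators shrink geometrically, so reach `1`,
and the absence of small subgroups in a normed algebra runs this descent backwards. For such an `α`
and `β ∈ Γ` with small linear part and `β 0` near `s • v`, `⁅α, β⁆` is a translation close to
`s • (A - 1) v`; so `A` is the identity on the orthogonal complement of the span. If that
complement contained `c ≠ 0`, a power of an `α` with `⟪α 0, c⟫ > 0` would be a translation not
orthogonal to `c`.
-/

open scoped RealInnerProductSpace commutatorElement

theorem eq_one_of_forall_norm_pow_sub_one_le {R : Type*} [NormedRing R] [NormedAlgebra ℝ R]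
    {d : R} {c : ℝ} (hc : c < 1) (h : ∀ j : ℕ, ‖d ^ j - 1‖ ≤ c) : d = 1 := by
  have hdouble : ∀ j : ℕ, (2 - c) * ‖d ^ j - 1‖ ≤ ‖d ^ (2 * j) - 1‖ := by
    intro j
    set x := d ^ j - 1
    have hsq : (2 : ℝ) • x = (d ^ (2 * j) - 1) - x * x := by
      rw [two_mul, pow_add, two_smul]; simp only [x]; noncomm_ring
    have h2x : ‖(2 : ℝ) • x‖ = 2 * ‖x‖ := by rw [norm_smul]; norm_num
    have hxx : ‖x * x‖ ≤ c * ‖x‖ :=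
      (norm_mul_le x x).trans (mul_le_mul_of_nonneg_right (h j) (norm_nonneg x))
    have := norm_sub_le (d ^ (2 * j) - 1) (x * x)
    rw [← hsq, h2x] at this
    linarith
  have hgrowth : ∀ k : ℕ, (2 - c) ^ k * ‖d - 1‖ ≤ ‖d ^ 2 ^ k - 1‖ := by
    intro k
    induction k with
    | zero => simp
    | succ k ih =>
      calc (2 - c) ^ (k + 1) * ‖d - 1‖ = (2 - c) * ((2 - c) ^ k * ‖d - 1‖) := by ring
        _ ≤ (2 - c) * ‖d ^ 2 ^ k - 1‖ := by gcongr; linarith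
        _ ≤ ‖d ^ 2 ^ (k + 1) - 1‖ := by rw [pow_succ']; exact hdouble _
  by_contra hd
  have hpos : 0 < ‖d - 1‖ := norm_pos_iff.mpr (sub_ne_zero.mpr hd)
  obtain ⟨k, hk⟩ := pow_unbounded_of_one_lt (c / ‖d - 1‖) (by linarith : (1 : ℝ) < 2 - c)
  rw [div_lt_iff₀ hpos] at hk
  linarith [hgrowth k, h (2 ^ k)]

theorem norm_mul_sub_mul_le {R : Type*} [NormedRing R] (a b : R) :
    ‖a * b - b * a‖ ≤ 2 * ‖a - 1‖ * ‖b - 1‖ := by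
  have key : a * b - b * a = (a - 1) * (b - 1) - (b - 1) * (a - 1) := by noncomm_ring
  calc ‖a * b - b * a‖ ≤ ‖(a - 1) * (b - 1)‖ + ‖(b - 1) * (a - 1)‖ := key ▸ norm_sub_le _ _
    _ ≤ ‖a - 1‖ * ‖b - 1‖ + ‖b - 1‖ * ‖a - 1‖ := add_le_add (norm_mul_le _ _) (norm_mul_le _ _)
    _ = 2 * ‖a - 1‖ * ‖b - 1‖ := by ring

theorem Subgroup.commutatorElement_mem {G : Type*} [Group G] {H : Subgroup G} {a b : G}
    (ha : a ∈ H) (hb : b ∈ H) : ⁅a, b⁆ ∈ H := by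
  rw [commutatorElement_def]
  exact mul_mem (mul_mem (mul_mem ha hb) (inv_mem ha)) (inv_mem hb)

theorem Set.Infinite.exists_ne_dist_lt {X : Type*} [MetricSpace X] [ProperSpace X] {s : Set X}
    (hs : s.Infinite) (hb : Bornology.IsBounded s) {δ : ℝ} (hδ : 0 < δ) :
    ∃ x ∈ s, ∃ y ∈ s, x ≠ y ∧ dist x y < δ := by
  obtain ⟨z, -, hz⟩ := hs.exists_accPt_of_subset_isCompact hb.isCompact_closure subset_closure
  have hball := Metric.ball_mem_nhds z (half_pos hδ)
  obtain ⟨x, ⟨hxz, hxs⟩, hxne⟩ := accPt_iff_nhds.mp hz _ hball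
  obtain ⟨y, ⟨⟨hyz, hyx⟩, hys⟩, -⟩ := accPt_iff_nhds.mp hz _
    (Filter.inter_mem hball (isOpen_compl_singleton.mem_nhds (Ne.symm hxne)))
  refine ⟨x, hxs, y, hys, Ne.symm hyx, ?_⟩
  rw [Metric.mem_ball] at hxz hyz
  linarith [dist_triangle_right x y z]

theorem ContinuousLinearMap.eq_zero_of_forall_norm_apply_le {E F : Type*}
    [NormedAddCommGroup E] [NormedSpace ℝ E] [NormedAddCommGroup F] [NormedSpace ℝ F]
    (f : E →L[ℝ] F) {C : ℝ} (h : ∀ x, ‖f x‖ ≤ C) : f = 0 := by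
  ext x
  by_contra hx
  have hpos : 0 < ‖f x‖ := norm_pos_iff.mpr hx
  have := h (((|C| + 1) / ‖f x‖) • x)
  rw [map_smul, norm_smul, Real.norm_of_nonneg (by positivity), div_mul_cancel₀ _ hpos.ne'] at this
  linarith [le_abs_self C]

theorem Submodule.exists_span_inter_closedBall_eq {E : Type*} [NormedAddCommGroup E]
    [NormedSpace ℝ E] [FiniteDimensional ℝ E] (s : Set E) :
    ∃ ρ : ℝ, Submodule.span ℝ (s ∩ Metric.closedBall 0 ρ) = Submodule.span ℝ s := by
  obtain ⟨b, hbs, hbspan, hbli⟩ := exists_linearIndependent ℝ s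
  have : Finite b := hbli.finite
  obtain ⟨ρ, hρ⟩ := (Set.toFinite b).isBounded.subset_closedBall 0
  refine ⟨ρ, le_antisymm (Submodule.span_mono Set.inter_subset_left) ?_⟩
  rw [← hbspan]
  exact Submodule.span_mono (Set.subset_inter hbs hρ)

theorem exists_mem_inner_ne_zero_of_span_eq_top {E : Type*} [NormedAddCommGroup E]
    [InnerProductSpace ℝ E] {s : Set E} (hs : Submodule.span ℝ s = ⊤) {c : E} (hc : c ≠ 0) :
    ∃ t ∈ s, ⟪t, c⟫ ≠ 0 := by
  by_contra! h
  have hzero : (innerₛₗ ℝ c : E →ₗ[ℝ] ℝ) = 0 :=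
    LinearMap.ext_on hs fun x hx => by simpa [real_inner_comm] using h x hx
  exact hc (inner_self_eq_zero.mp (LinearMap.congr_fun hzero c))

namespace SpaceGroup

variable {n : ℕ}

/-! ### Linear parts, translations and isometries -/

noncomputable def linearPart : AffG n →* (Euc n →L[ℝ] Euc n) where
  toFun γ := LinearMap.toContinuousLinearMap γ.linear
  map_one' := rfl
  map_mul' _ _ := rfl

@[simp] lemma linearPart_apply (γ : AffG n) (x : Euc n) : linearPart γ x = γ.linear x := rfl

lemma apply_eq_linearPart_add (γ : AffG n) (x : Euc n) : γ x = linearPart γ x + γ 0 := by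
  exact sub_eq_iff_eq_add.mp (by simpa using (γ.toAffineMap.linearMap_vsub x 0).symm)

lemma linearPart_inv_mul (γ : AffG n) : linearPart γ⁻¹ * linearPart γ = 1 := by
  rw [← map_mul, inv_mul_cancel, map_one]

lemma linearPart_mul_inv (γ : AffG n) : linearPart γ * linearPart γ⁻¹ = 1 := by
  rw [← map_mul, mul_inv_cancel, map_one]

lemma inv_apply (γ : AffG n) (x : Euc n) : γ⁻¹ x = linearPart γ⁻¹ (x - γ 0) := by
  have h0 : γ⁻¹ 0 = -linearPart γ⁻¹ (γ 0) := by
    have := apply_eq_linearPart_add γ⁻¹ (γ 0)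
    rw [show γ⁻¹ (γ 0) = 0 from γ.symm_apply_apply 0] at this
    exact eq_neg_of_add_eq_zero_right this.symm
  rw [apply_eq_linearPart_add γ⁻¹ x, h0, map_sub, sub_eq_add_neg]

@[simp] lemma linearPart_apply_linearPart_inv_apply (γ : AffG n) (x : Euc n) :
    linearPart γ (linearPart γ⁻¹ x) = x := by
  change (linearPart γ * linearPart γ⁻¹) x = x
  rw [linearPart_mul_inv, one_apply_eq_self]

@[simp] lemma linearPart_inv_apply_linearPart_apply (γ : AffG n) (x : Euc n) :
    linearPart γ⁻¹ (linearPart γ x) = x := by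
  simpa using linearPart_apply_linearPart_inv_apply γ⁻¹ x

lemma ext_linearPart {γ δ : AffG n} (h₁ : linearPart γ = linearPart δ) (h₂ : γ 0 = δ 0) :
    γ = δ :=
  AffineEquiv.ext fun x => by rw [apply_eq_linearPart_add γ, apply_eq_linearPart_add δ, h₁, h₂]

noncomputable def toProd (γ : AffG n) : Euc n × (Euc n →L[ℝ] Euc n) := (γ 0, linearPart γ)

lemma toProd_injective : Function.Injective (toProd (n := n)) := fun _ _ h =>
  ext_linearPart (congrArg Prod.snd h) (congrArg Prod.fst h)

lemma dist_toProd_one (γ : AffG n) :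
    dist (toProd γ) (toProd 1) = max ‖γ 0‖ ‖linearPart γ - 1‖ := by
  rw [toProd, toProd, Prod.dist_eq, dist_eq_norm, dist_eq_norm, map_one]
  exact congrArg (max · _) (congrArg norm (sub_zero (γ 0)))

lemma transl_apply (a x : Euc n) : transl a x = a + x := rfl

lemma linearPart_transl (a : Euc n) : linearPart (transl a) = 1 := rfl

lemma transl_add (a b : Euc n) : transl (a + b) = transl a * transl b :=
  AffineEquiv.constVAdd_add ℝ (Euc n) a b

lemma transl_zero : transl (0 : Euc n) = 1 := AffineEquiv.constVAdd_zero ℝ (Euc n)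

lemma transl_injective : Function.Injective (transl (n := n)) := fun a b h => by
  simpa [transl_apply] using congrArg (· 0) h

lemma eq_transl_of_linearPart_eq_one {γ : AffG n} (h : linearPart γ = 1) :
    γ = transl (γ 0) :=
  ext_linearPart (by rw [h, linearPart_transl]) (by simp [transl_apply])

lemma conj_transl (γ : AffG n) (t : Euc n) :
    γ * transl t * γ⁻¹ = transl (linearPart γ t) := by
  refine ext_linearPart ?_ ?_
  · rw [map_mul, map_mul, linearPart_transl, mul_one, linearPart_mul_inv, linearPart_transl]
  · have h : linearPart γ (γ⁻¹ 0) + γ 0 = 0 := by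
      rw [← apply_eq_linearPart_add]; exact γ.apply_symm_apply 0
    change γ (t + γ⁻¹ 0) = linearPart γ t + 0
    rw [apply_eq_linearPart_add, map_add, add_assoc, h]

lemma commute_transl_iff {γ : AffG n} {t : Euc n} :
    Commute (transl t) γ ↔ linearPart γ t = t := by
  rw [← transl_injective.eq_iff, ← conj_transl, eq_comm, commute_iff_eq, eq_mul_inv_iff_mul_eq]

def translations (Γ : Subgroup (AffG n)) : AddSubgroup (Euc n) where
  carrier := {a | transl a ∈ Γ}
  add_mem' ha hb := by rw [Set.mem_ofPred_eq, transl_add]; exact mul_mem ha hb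
  zero_mem' := by rw [Set.mem_ofPred_eq, transl_zero]; exact one_mem Γ
  neg_mem' {a} ha := by
    have : transl (-a) = (transl a)⁻¹ :=
      eq_inv_of_mul_eq_one_left (by rw [← transl_add, neg_add_cancel, transl_zero])
    rw [Set.mem_ofPred_eq, this]; exact inv_mem ha

lemma mem_translations {Γ : Subgroup (AffG n)} {t : Euc n} :
    t ∈ translations Γ ↔ transl t ∈ Γ := Iff.rfl

lemma spanOf_eq_span_translations (Γ : Subgroup (AffG n)) :
    spanOf Γ = Submodule.span ℝ (translations Γ) := rfl

lemma linearPart_mem_translations {Γ : Subgroup (AffG n)} {γ : AffG n} (hγ : γ ∈ Γ)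
    {t : Euc n} (ht : t ∈ translations Γ) : linearPart γ t ∈ translations Γ := by
  rw [mem_translations, ← conj_transl]
  exact mul_mem (mul_mem hγ ht) (inv_mem hγ)

lemma commutatorElement_eq (α β : AffG n) : ⁅α, β⁆ = α * β * (β * α)⁻¹ := by
  rw [commutatorElement_def]; group

lemma linearPart_commutator_eq_one_iff {α β : AffG n} :
    linearPart ⁅α, β⁆ = 1 ↔ Commute (linearPart α) (linearPart β) := by
  have h : linearPart (β * α)⁻¹ = ↑(linearPart.toHomUnits (β * α))⁻¹ := by
    rw [← map_inv, MonoidHom.coe_toHomUnits]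
  rw [commutatorElement_eq, map_mul, h, Units.mul_inv_eq_one, MonoidHom.coe_toHomUnits, map_mul,
    map_mul]
  rfl

lemma commutator_apply_zero_of_commute {α β : AffG n}
    (h : Commute (linearPart α) (linearPart β)) :
    ⁅α, β⁆ 0 = (linearPart α - 1) (β 0) - (linearPart β - 1) (α 0) := by
  set y := (β * α)⁻¹ 0
  have hy : (β * α) y = 0 := (β * α).apply_symm_apply 0
  have hcomm : linearPart α (linearPart β y) = linearPart β (linearPart α y) :=
    congrArg (· y) h.eq
  calc ⁅α, β⁆ 0 = (α * β) y - (β * α) y := by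
        rw [hy, sub_zero, commutatorElement_eq]; rfl
    _ = _ := by
        change α (β y) - β (α y) = _
        rw [apply_eq_linearPart_add α (β y), apply_eq_linearPart_add β y,
          apply_eq_linearPart_add β (α y), apply_eq_linearPart_add α y]
        simp only [map_add, hcomm, sub_apply, one_apply_eq_self]
        abel

def isometries (n : ℕ) : Subgroup (AffG n) where
  carrier := {f | Isometry ⇑f}
  mul_mem' hf hg := hf.comp hg
  one_mem' := isometry_id
  inv_mem' {f} hf := fun x y => by
    rw [← hf.edist_eq]
    exact congrArg₂ edist (f.apply_symm_apply x) (f.apply_symm_apply y)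

lemma mem_isometries {γ : AffG n} : γ ∈ isometries n ↔ Isometry ⇑γ := Iff.rfl

section isometries

variable {γ : AffG n} (hγ : γ ∈ isometries n)
include hγ

lemma norm_apply_sub_apply (x y : Euc n) : ‖γ x - γ y‖ = ‖x - y‖ := by
  simpa only [dist_eq_norm] using (mem_isometries.mp hγ).dist_eq x y

lemma norm_linearPart_apply (x : Euc n) : ‖linearPart γ x‖ = ‖x‖ := by
  have h := norm_apply_sub_apply hγ x 0
  rwa [apply_eq_linearPart_add γ x, add_sub_cancel_right, sub_zero] at h

lemma inner_linearPart_apply (x y : Euc n) :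
    ⟪linearPart γ x, linearPart γ y⟫ = ⟪x, y⟫ :=
  LinearIsometry.inner_map_map
    { toLinearMap := (linearPart γ).toLinearMap, norm_map' := norm_linearPart_apply hγ } x y

lemma norm_linearPart_le_one : ‖linearPart γ‖ ≤ 1 :=
  ContinuousLinearMap.opNorm_le_bound _ zero_le_one fun x => by
    rw [norm_linearPart_apply hγ, one_mul]

lemma norm_linearPart_sub_one_le_two : ‖linearPart γ - 1‖ ≤ 2 :=
  calc ‖linearPart γ - 1‖ ≤ ‖linearPart γ‖ + ‖(1 : Euc n →L[ℝ] Euc n)‖ := norm_sub_le _ _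
    _ ≤ 1 + 1 := add_le_add (norm_linearPart_le_one hγ) ContinuousLinearMap.norm_id_le
    _ = 2 := one_add_one_eq_two

lemma norm_linearPart_mul (M : Euc n →L[ℝ] Euc n) : ‖linearPart γ * M‖ = ‖M‖ := by
  refine le_antisymm (ContinuousLinearMap.opNorm_le_bound _ (norm_nonneg M) fun x => ?_) ?_
  · change ‖linearPart γ (M x)‖ ≤ _
    rw [norm_linearPart_apply hγ]
    exact M.le_opNorm x
  · refine ContinuousLinearMap.opNorm_le_bound _ (norm_nonneg _) fun x => ?_
    rw [← norm_linearPart_apply hγ]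
    exact (linearPart γ * M).le_opNorm x

lemma norm_mul_linearPart (M : Euc n →L[ℝ] Euc n) : ‖M * linearPart γ‖ = ‖M‖ := by
  have hle : ∀ δ ∈ isometries n, ∀ N : Euc n →L[ℝ] Euc n, ‖N * linearPart δ‖ ≤ ‖N‖ :=
    fun δ hδ N => ContinuousLinearMap.opNorm_le_bound _ (norm_nonneg N) fun x => by
      rw [← norm_linearPart_apply hδ x]
      exact N.le_opNorm _
  refine le_antisymm (hle γ hγ M) ?_
  calc ‖M‖ = ‖M * linearPart γ * linearPart γ⁻¹‖ := by
        rw [mul_assoc, linearPart_mul_inv, mul_one]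
    _ ≤ ‖M * linearPart γ‖ := hle _ (inv_mem hγ) _

lemma norm_linearPart_inv_sub_one : ‖linearPart γ⁻¹ - 1‖ = ‖linearPart γ - 1‖ := by
  rw [← norm_mul_linearPart hγ, sub_mul, linearPart_inv_mul, one_mul, norm_sub_rev]

lemma dist_toProd_mul (a b : AffG n) :
    dist (toProd (γ * a)) (toProd (γ * b)) = dist (toProd a) (toProd b) := by
  rw [toProd, toProd, toProd, toProd, Prod.dist_eq, Prod.dist_eq, dist_eq_norm, dist_eq_norm,
    dist_eq_norm, dist_eq_norm, map_mul, map_mul, ← mul_sub, norm_linearPart_mul hγ]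
  exact congrArg (max · _) (norm_apply_sub_apply hγ _ _)

end isometries

section commutator

variable {α β : AffG n} (hα : α ∈ isometries n) (hβ : β ∈ isometries n)
include hα hβ

lemma norm_linearPart_commutator_sub_one_le :
    ‖linearPart ⁅α, β⁆ - 1‖ ≤ 2 * ‖linearPart α - 1‖ * ‖linearPart β - 1‖ := by
  have h : linearPart ⁅α, β⁆ - 1 =
      (linearPart α * linearPart β - linearPart β * linearPart α) * linearPart (β * α)⁻¹ := by
    rw [sub_mul, ← map_mul linearPart β α, linearPart_mul_inv, ← map_mul, ← map_mul,
      ← commutatorElement_eq]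
  rw [h, norm_mul_linearPart (inv_mem (mul_mem hβ hα))]
  exact norm_mul_sub_mul_le _ _

lemma norm_commutator_apply_zero_le :
    ‖⁅α, β⁆ 0‖ ≤ ‖linearPart β - 1‖ * ‖α 0‖ + ‖linearPart α - 1‖ * ‖β 0‖ := by
  have key : ⁅α, β⁆ 0 = -linearPart α ((linearPart β - 1) (linearPart α⁻¹ (α 0)))
      - linearPart α (linearPart β ((linearPart α⁻¹ - 1) (linearPart β⁻¹ (β 0)))) := by
    change α (β (α⁻¹ (β⁻¹ 0))) = _
    rw [inv_apply β, inv_apply α, apply_eq_linearPart_add β, apply_eq_linearPart_add α]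
    simp only [map_sub, map_neg, map_add, sub_apply, one_apply_eq_self, zero_sub,
      linearPart_apply_linearPart_inv_apply]
    abel
  rw [key]
  refine (norm_sub_le _ _).trans (add_le_add ?_ ?_)
  · rw [norm_neg, norm_linearPart_apply hα]
    calc _ ≤ ‖linearPart β - 1‖ * ‖linearPart α⁻¹ (α 0)‖ := ContinuousLinearMap.le_opNorm _ _
      _ = _ := by rw [norm_linearPart_apply (inv_mem hα)]
  · rw [norm_linearPart_apply hα, norm_linearPart_apply hβ]
    calc _ ≤ ‖linearPart α⁻¹ - 1‖ * ‖linearPart β⁻¹ (β 0)‖ := ContinuousLinearMap.le_opNorm _ _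
      _ = _ := by rw [norm_linearPart_apply (inv_mem hβ), norm_linearPart_inv_sub_one hα]

end commutator

/-! ### Discreteness -/

def IsDiscrete (H : Subgroup (AffG n)) : Prop :=
  ∃ ε > 0, ∀ h ∈ H, dist (toProd h) (toProd 1) < ε → h = 1

lemma isDiscrete_of_finite {H : Subgroup (AffG n)} (hfin : {γ | γ ∈ H ∧ ‖γ 0‖ ≤ 1}.Finite) :
    IsDiscrete H := by
  set F := toProd '' {γ | γ ∈ H ∧ ‖γ 0‖ ≤ 1 ∧ γ ≠ 1}
  have hF : F.Finite := (hfin.subset fun γ hγ => ⟨hγ.1, hγ.2.1⟩).image _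
  have h1 : toProd 1 ∉ F := fun ⟨γ, hγ, h⟩ => hγ.2.2 (toProd_injective h)
  obtain ⟨ε, hε, hball⟩ := Metric.isOpen_iff.mp hF.isClosed.isOpen_compl _ h1
  refine ⟨min ε 1, lt_min hε one_pos, fun h hH hd => ?_⟩
  rw [lt_min_iff, dist_toProd_one] at hd
  by_contra hne
  refine hball (Metric.mem_ball.mpr ?_) ⟨h, ⟨hH, ?_, hne⟩, rfl⟩
  · rw [dist_toProd_one]; exact hd.1
  · exact (le_max_left _ _).trans hd.2.le

lemma finite_of_isDiscrete {H : Subgroup (AffG n)} (hH : H ≤ isometries n) (hd : IsDiscrete H)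
    (c : ℝ) : {γ | γ ∈ H ∧ ‖γ 0‖ ≤ c}.Finite := by
  by_contra hinf
  obtain ⟨ε, hε, hd⟩ := hd
  have hb : Bornology.IsBounded (toProd '' {γ | γ ∈ H ∧ ‖γ 0‖ ≤ c}) := by
    refine (Metric.isBounded_closedBall (x := 0) (r := max c 1)).subset ?_
    rintro _ ⟨γ, hγ, rfl⟩
    rw [Metric.mem_closedBall, dist_zero_right, Prod.norm_def]
    exact max_le_max hγ.2 (norm_linearPart_le_one (hH hγ.1))
  obtain ⟨_, ⟨g, hg, rfl⟩, _, ⟨g', hg', rfl⟩, hne, hdist⟩ :=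
    (Set.Infinite.image toProd_injective.injOn hinf).exists_ne_dist_lt hb hε
  refine hne (congrArg toProd (inv_mul_eq_one.mp (hd _ (mul_mem (inv_mem hg.1) hg'.1) ?_)))
  rwa [← inv_mul_cancel g, dist_toProd_mul (inv_mem (hH hg.1)), dist_comm]

lemma finite_of_properlyDiscontinuous {Γ : Subgroup (AffG n)}
    (hpd : ∀ K : Set (Euc n), IsCompact K →
      {γ : AffG n | γ ∈ Γ ∧ ((⇑γ '' K) ∩ K).Nonempty}.Finite) (c : ℝ) :
    {γ | γ ∈ Γ ∧ ‖γ 0‖ ≤ c}.Finite :=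
  (hpd _ (isCompact_closedBall 0 |c|)).subset fun γ ⟨hγ, hc⟩ =>
    ⟨hγ, γ 0, ⟨0, by simp, rfl⟩, by simpa using hc.trans (le_abs_self c)⟩

lemma properlyDiscontinuous_of_finite {H : Subgroup (AffG n)} (hH : H ≤ isometries n)
    (hfin : ∀ c : ℝ, {γ | γ ∈ H ∧ ‖γ 0‖ ≤ c}.Finite) (K : Set (Euc n)) (hK : IsCompact K) :
    {γ : AffG n | γ ∈ H ∧ ((⇑γ '' K) ∩ K).Nonempty}.Finite := by
  obtain ⟨r, hr⟩ := hK.isBounded.subset_closedBall 0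
  refine (hfin (r + r)).subset ?_
  rintro γ ⟨hγ, _, ⟨x, hx, rfl⟩, hγx⟩
  have hxr := hr hx
  have hγxr := hr hγx
  rw [Metric.mem_closedBall, dist_zero_right] at hxr hγxr
  refine ⟨hγ, ?_⟩
  calc ‖γ 0‖ ≤ ‖γ 0 - γ x‖ + ‖γ x‖ := norm_le_norm_sub_add _ _
    _ ≤ r + r := by rw [norm_apply_sub_apply (hH hγ), zero_sub, norm_neg]; linarith

lemma exists_norm_apply_zero_sub_le_of_cocompact {Γ : Subgroup (AffG n)}
    (hΓ : Γ ≤ isometries n)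
    (hcoc : ∃ K : Set (Euc n), IsCompact K ∧ ∀ x : Euc n, ∃ γ ∈ Γ, γ x ∈ K) :
    ∃ D : ℝ, ∀ x : Euc n, ∃ γ ∈ Γ, ‖γ 0 - x‖ ≤ D := by
  obtain ⟨K, hK, hcover⟩ := hcoc
  obtain ⟨r, hr⟩ := hK.isBounded.subset_closedBall 0
  refine ⟨r, fun x => ?_⟩
  obtain ⟨γ, hγ, hγx⟩ := hcover x
  refine ⟨γ⁻¹, inv_mem hγ, ?_⟩
  have h := hr hγx
  rw [Metric.mem_closedBall, dist_zero_right] at h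
  calc ‖γ⁻¹ 0 - x‖ = ‖γ⁻¹ 0 - γ⁻¹ (γ x)‖ := by rw [show γ⁻¹ (γ x) = x from γ.symm_apply_apply x]
    _ = ‖γ x‖ := by rw [norm_apply_sub_apply (inv_mem (hΓ hγ)), zero_sub, norm_neg]
    _ ≤ r := h

lemma finite_translations {Γ : Subgroup (AffG n)} {c : ℝ}
    (hfin : {γ | γ ∈ Γ ∧ ‖γ 0‖ ≤ c}.Finite) :
    ((translations Γ : Set (Euc n)) ∩ Metric.closedBall 0 c).Finite :=
  (hfin.preimage transl_injective.injOn).subset fun t ⟨ht, hc⟩ =>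
    ⟨ht, by simpa [transl_apply] using hc⟩

/-! ### The translations of a space group span `Eⁿ` -/

lemma linearPart_commutator_eq_one_of_commute {α γ : AffG n} (hα : α ∈ isometries n)
    (hγ : γ ∈ isometries n) (hγ1 : ‖linearPart γ - 1‖ ≤ 1 / 8)
    (hcomm : Commute (linearPart α) (linearPart ⁅α, γ⁆)) : linearPart ⁅α, γ⁆ = 1 := by
  set D := linearPart ⁅α, γ⁆
  have hpow : ∀ j : ℕ, linearPart ⁅α ^ j, γ⁆ = D ^ j := by
    intro j
    induction j with
    | zero => simp [commutatorElement_def]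
    | succ j ih =>
      have h : ⁅α ^ (j + 1), γ⁆ = α * ⁅α ^ j, γ⁆ * α⁻¹ * ⁅α, γ⁆ := by
        simp only [commutatorElement_def]; group
      rw [h, map_mul, map_mul, map_mul, ih, (hcomm.pow_right j).eq, mul_assoc (D ^ j),
        linearPart_mul_inv, mul_one, pow_succ]
  refine eq_one_of_forall_norm_pow_sub_one_le (c := 1 / 2) (by norm_num) fun j => ?_
  rw [← hpow]
  calc ‖linearPart ⁅α ^ j, γ⁆ - 1‖ ≤ 2 * ‖linearPart (α ^ j) - 1‖ * ‖linearPart γ - 1‖ :=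
        norm_linearPart_commutator_sub_one_le (pow_mem hα j) hγ
    _ ≤ 2 * 2 * (1 / 8) := by
        gcongr
        exact norm_linearPart_sub_one_le_two (pow_mem hα j)
    _ = 1 / 2 := by norm_num

lemma weight_commutator_le_half {α γ : AffG n} (hα : α ∈ isometries n) (hγ : γ ∈ isometries n)
    (hα1 : ‖linearPart α - 1‖ ≤ 1 / 8) :
    (4 * ‖α 0‖ + 1) * ‖linearPart ⁅α, γ⁆ - 1‖ + ‖⁅α, γ⁆ 0‖ ≤
      ((4 * ‖α 0‖ + 1) * ‖linearPart γ - 1‖ + ‖γ 0‖) / 2 := by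
  have h₁ := norm_linearPart_commutator_sub_one_le hα hγ
  have h₂ := norm_commutator_apply_zero_le hα hγ
  have ha := norm_nonneg (linearPart γ - 1)
  have hb := norm_nonneg (γ 0)
  have hM := norm_nonneg (α 0)
  have h₁' : ‖linearPart ⁅α, γ⁆ - 1‖ ≤ ‖linearPart γ - 1‖ / 4 := by nlinarith
  have h₂' : ‖⁅α, γ⁆ 0‖ ≤ ‖linearPart γ - 1‖ * ‖α 0‖ + ‖γ 0‖ / 8 := by nlinarith
  nlinarith

section discrete

variable {Γ : Subgroup (AffG n)} (hΓ : Γ ≤ isometries n) (hd : IsDiscrete Γ)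
include hΓ hd

lemma exists_iterate_commutator_eq_one {α β : AffG n} (hα : α ∈ Γ) (hβ : β ∈ Γ)
    (hα1 : ‖linearPart α - 1‖ ≤ 1 / 8) : ∃ k : ℕ, (⁅α, ·⁆)^[k] β = 1 := by
  obtain ⟨ε, hε, hd⟩ := hd
  set w : AffG n → ℝ := fun γ => (4 * ‖α 0‖ + 1) * ‖linearPart γ - 1‖ + ‖γ 0‖
  have hhalf : ∀ γ ∈ Γ, w ⁅α, γ⁆ ≤ w γ / 2 := fun γ hγ =>
    weight_commutator_le_half (hΓ hα) (hΓ hγ) hα1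
  have hmem : ∀ k, (⁅α, ·⁆)^[k] β ∈ Γ := fun k => by
    induction k with
    | zero => exact hβ
    | succ k ih =>
      rw [Function.iterate_succ_apply']
      exact Subgroup.commutatorElement_mem hα ih
  have hdecay : ∀ k : ℕ, w ((⁅α, ·⁆)^[k] β) ≤ w β * (1 / 2) ^ k := fun k => by
    induction k with
    | zero => simp
    | succ k ih =>
      rw [Function.iterate_succ_apply', pow_succ]
      linarith [hhalf _ (hmem k)]
  have hlim : Filter.Tendsto (fun k : ℕ => w β * (1 / 2) ^ k) Filter.atTop (nhds 0) := by
    simpa using (tendsto_pow_atTop_nhds_zero_of_lt_one (by norm_num) (by norm_num :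
      (1 / 2 : ℝ) < 1)).const_mul (w β)
  obtain ⟨k, hk⟩ := (hlim.eventually (gt_mem_nhds hε)).exists
  refine ⟨k, hd _ (hmem k) ?_⟩
  set γ := (⁅α, ·⁆)^[k] β
  have hw : max ‖γ 0‖ ‖linearPart γ - 1‖ ≤ w γ := by
    have := norm_nonneg (α 0)
    have := norm_nonneg (linearPart γ - 1)
    exact max_le (by simp only [w]; nlinarith) (by simp only [w]; nlinarith [norm_nonneg (γ 0)])
  rw [dist_toProd_one]
  linarith [hdecay k]

lemma commute_linearPart_of_norm_sub_one_le {α β : AffG n} (hα : α ∈ Γ) (hβ : β ∈ Γ)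
    (hα1 : ‖linearPart α - 1‖ ≤ 1 / 8) (hβ1 : ‖linearPart β - 1‖ ≤ 1 / 8) :
    Commute (linearPart α) (linearPart β) := by
  obtain ⟨k, hk⟩ := exists_iterate_commutator_eq_one hΓ hd hα hβ hα1
  induction k generalizing β with
  | zero => rw [Function.iterate_zero_apply] at hk; rw [hk, map_one]; exact Commute.one_right _
  | succ k ih =>
    rw [Function.iterate_succ_apply] at hk
    have hsmall : ‖linearPart ⁅α, β⁆ - 1‖ ≤ 1 / 8 := by
      have := norm_linearPart_commutator_sub_one_le (hΓ hα) (hΓ hβ)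
      nlinarith [norm_nonneg (linearPart α - 1), norm_nonneg (linearPart β - 1)]
    have := ih (Subgroup.commutatorElement_mem hα hβ) hsmall hk
    exact linearPart_commutator_eq_one_iff.mp
      (linearPart_commutator_eq_one_of_commute (hΓ hα) (hΓ hβ) hβ1 this)

end discrete

lemma exists_forall_exists_linearPart_near_one {Γ : Subgroup (AffG n)} (hΓ : Γ ≤ isometries n)
    {D : ℝ} (hcoc : ∀ x : Euc n, ∃ γ ∈ Γ, ‖γ 0 - x‖ ≤ D) {ε : ℝ} (hε : 0 < ε) :
    ∃ R : ℝ, ∀ x : Euc n, ∃ β ∈ Γ, ‖linearPart β - 1‖ ≤ ε ∧ ‖β 0 - x‖ ≤ R := by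
  have htb : TotallyBounded (linearPart '' (Γ : Set (AffG n))) :=
    (isCompact_closedBall (0 : Euc n →L[ℝ] Euc n) 1).totallyBounded.subset <| by
      rintro _ ⟨γ, hγ, rfl⟩
      rw [Metric.mem_closedBall, dist_zero_right]
      exact norm_linearPart_le_one (hΓ hγ)
  obtain ⟨T, hTΓ, hTfin, hcover⟩ :=
    Set.exists_subset_image_finite_and.mp (Metric.finite_approx_of_totallyBounded htb ε hε)
  obtain ⟨C, hC⟩ := (hTfin.image fun φ => ‖φ⁻¹ 0‖).bddAbove
  refine ⟨C + D, fun x => ?_⟩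
  obtain ⟨γ, hγ, hγx⟩ := hcoc x
  obtain ⟨φ, hφT, hγφ⟩ : ∃ φ ∈ T, dist (linearPart γ) (linearPart φ) < ε := by
    simpa using hcover (Set.mem_image_of_mem _ hγ)
  have hφ := hTΓ hφT
  refine ⟨γ * φ⁻¹, mul_mem hγ (inv_mem hφ), ?_, ?_⟩
  · rw [← norm_mul_linearPart (hΓ hφ), sub_mul, one_mul, ← map_mul,
      inv_mul_cancel_right, ← dist_eq_norm]
    exact hγφ.le
  · calc ‖(γ * φ⁻¹) 0 - x‖ ≤ ‖γ (φ⁻¹ 0) - γ 0‖ + ‖γ 0 - x‖ :=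
          norm_sub_le_norm_sub_add_norm_sub _ _ _
      _ ≤ C + D := by
        rw [norm_apply_sub_apply (hΓ hγ), sub_zero]
        exact add_le_add (hC (Set.mem_image_of_mem _ hφT)) hγx

lemma linearPart_mem_spanOf {Γ : Subgroup (AffG n)} {γ : AffG n} (hγ : γ ∈ Γ) {u : Euc n}
    (hu : u ∈ spanOf Γ) : linearPart γ u ∈ spanOf Γ :=
  (Submodule.span_le (p := (spanOf Γ).comap (linearPart γ).toLinearMap)).mpr
    (fun _ ht => Submodule.subset_span (linearPart_mem_translations hγ ht)) hu

lemma linearPart_mem_orthogonal_spanOf {Γ : Subgroup (AffG n)} (hΓ : Γ ≤ isometries n)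
    {γ : AffG n} (hγ : γ ∈ Γ) {w : Euc n} (hw : w ∈ (spanOf Γ)ᗮ) :
    linearPart γ w ∈ (spanOf Γ)ᗮ := by
  rw [Submodule.mem_orthogonal] at hw ⊢
  intro u hu
  rw [← linearPart_apply_linearPart_inv_apply γ u, inner_linearPart_apply (hΓ hγ)]
  exact hw _ (linearPart_mem_spanOf (inv_mem hγ) hu)

lemma inner_pow_apply_zero {α : AffG n} (hα : α ∈ isometries n) {c : Euc n}
    (hc : linearPart α c = c) (m : ℕ) : ⟪(α ^ m) 0, c⟫ = m * ⟪α 0, c⟫ := by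
  induction m with
  | zero => simp
  | succ m ih =>
    have hinv : ⟪linearPart α ((α ^ m) 0), c⟫ = ⟪(α ^ m) 0, c⟫ := by
      conv_lhs => rw [← hc]
      exact inner_linearPart_apply hα _ _
    rw [pow_succ']
    change ⟪α ((α ^ m) 0), c⟫ = _
    rw [apply_eq_linearPart_add α, inner_add_left, hinv, ih]
    push_cast
    ring

lemma exists_forall_exists_mem_spanOf_norm_sub_le {Γ : Subgroup (AffG n)}
    (hΓ : Γ ≤ isometries n) {D : ℝ} (hcoc : ∀ x : Euc n, ∃ γ ∈ Γ, ‖γ 0 - x‖ ≤ D)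
    (hd : IsDiscrete Γ) {α : AffG n} (hα : α ∈ Γ) (hα1 : ‖linearPart α - 1‖ ≤ 1 / 8)
    (v : Euc n) :
    ∃ K : ℝ, 0 ≤ K ∧ ∀ s : ℝ, 0 < s → ∃ u ∈ spanOf Γ, ‖(linearPart α - 1) v - u‖ ≤ K / s := by
  obtain ⟨R, hR⟩ := exists_forall_exists_linearPart_near_one hΓ hcoc (ε := 1 / 8) (by norm_num)
  have hR0 : 0 ≤ R := by
    obtain ⟨β, -, -, h⟩ := hR 0
    exact (norm_nonneg _).trans h
  refine ⟨R + ‖α 0‖, by positivity, fun s hs => ?_⟩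
  obtain ⟨β, hβ, hβ1, hβs⟩ := hR (s • v)
  have hcomm := commute_linearPart_of_norm_sub_one_le hΓ hd hα hβ hα1 hβ1
  have he : ⁅α, β⁆ 0 ∈ translations Γ := by
    rw [mem_translations,
      ← eq_transl_of_linearPart_eq_one (linearPart_commutator_eq_one_iff.mpr hcomm)]
    exact Subgroup.commutatorElement_mem hα hβ
  refine ⟨s⁻¹ • ⁅α, β⁆ 0, Submodule.smul_mem _ _ (Submodule.subset_span he), ?_⟩
  have hdiff : (linearPart α - 1) (s • v) - ⁅α, β⁆ 0 =
      (linearPart α - 1) (s • v - β 0) + (linearPart β - 1) (α 0) := by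
    rw [commutator_apply_zero_of_commute hcomm, map_sub]
    abel
  have hbound : ‖(linearPart α - 1) (s • v) - ⁅α, β⁆ 0‖ ≤ R + ‖α 0‖ := by
    rw [hdiff]
    calc _ ≤ ‖linearPart α - 1‖ * ‖s • v - β 0‖ + ‖linearPart β - 1‖ * ‖α 0‖ :=
          norm_add_le_of_le (ContinuousLinearMap.le_opNorm _ _)
            (ContinuousLinearMap.le_opNorm _ _)
      _ ≤ 1 / 8 * R + 1 / 8 * ‖α 0‖ := by
          rw [norm_sub_rev (s • v)]
          gcongr
      _ ≤ R + ‖α 0‖ := by linarith [norm_nonneg (α 0)]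
  calc ‖(linearPart α - 1) v - s⁻¹ • ⁅α, β⁆ 0‖
      = s⁻¹ * ‖(linearPart α - 1) (s • v) - ⁅α, β⁆ 0‖ := by
        rw [map_smul, ← norm_smul_of_nonneg (inv_nonneg.mpr hs.le), smul_sub,
          inv_smul_smul₀ hs.ne']
    _ ≤ s⁻¹ * (R + ‖α 0‖) := by gcongr
    _ = (R + ‖α 0‖) / s := inv_mul_eq_div s _

lemma linearPart_sub_one_apply_mem_spanOf {Γ : Subgroup (AffG n)} (hΓ : Γ ≤ isometries n)
    {D : ℝ} (hcoc : ∀ x : Euc n, ∃ γ ∈ Γ, ‖γ 0 - x‖ ≤ D) (hd : IsDiscrete Γ) {α : AffG n}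
    (hα : α ∈ Γ) (hα1 : ‖linearPart α - 1‖ ≤ 1 / 8) (v : Euc n) :
    (linearPart α - 1) v ∈ spanOf Γ := by
  obtain ⟨K, hK, happrox⟩ := exists_forall_exists_mem_spanOf_norm_sub_le hΓ hcoc hd hα hα1 v
  refine (Submodule.closed_of_finiteDimensional (spanOf Γ)).closure_subset
    (Metric.mem_closure_iff.mpr fun η hη => ?_)
  obtain ⟨u, hu, hdist⟩ := happrox ((K + 1) / η) (by positivity)
  refine ⟨u, hu, (dist_eq_norm _ _).trans_lt (hdist.trans_lt ?_)⟩
  rw [div_div_eq_mul_div, div_lt_iff₀ (by positivity)]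
  nlinarith

lemma exists_pow_linearPart_eq_one {Γ : Subgroup (AffG n)} (hΓ : Γ ≤ isometries n)
    (hfin : ∀ c : ℝ, {γ | γ ∈ Γ ∧ ‖γ 0‖ ≤ c}.Finite) {α : AffG n} (hα : α ∈ Γ)
    (hfix : ∀ w ∈ (spanOf Γ)ᗮ, linearPart α w = w) :
    ∃ m : ℕ, 0 < m ∧ linearPart (α ^ m) = 1 := by
  obtain ⟨ρ, hρ⟩ := Submodule.exists_span_inter_closedBall_eq (translations Γ : Set (Euc n))
  set S := (translations Γ : Set (Euc n)) ∩ Metric.closedBall 0 ρ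
  have : Finite S := (finite_translations (hfin ρ)).to_subtype
  have hmaps : ∀ k : ℕ, ∀ t ∈ S, linearPart (α ^ k) t ∈ S := fun k t ht =>
    ⟨linearPart_mem_translations (pow_mem hα k) ht.1, by
      rw [Metric.mem_closedBall, dist_zero_right, norm_linearPart_apply (hΓ (pow_mem hα k))]
      simpa using ht.2⟩
  obtain ⟨i, j, hij, hfij⟩ := Finite.exists_ne_map_eq_of_infinite
    fun k (t : S) => (⟨linearPart (α ^ k) t, hmaps k t t.2⟩ : S)
  wlog hlt : i < j generalizing i j
  · exact this j i hij.symm hfij.symm (hij.lt_or_gt.resolve_left hlt)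
  have heq : linearPart (α ^ i) = linearPart (α ^ j) := by
    have hspan : Submodule.span ℝ (S ∪ (spanOf Γ)ᗮ) = ⊤ := by
      rw [Submodule.span_union, hρ, ← spanOf_eq_span_translations, Submodule.span_eq,
        Submodule.sup_orthogonal_of_hasOrthogonalProjection]
    refine ContinuousLinearMap.coe_injective (LinearMap.ext_on hspan ?_)
    rintro x (hx | hx)
    · exact congrArg Subtype.val (congrFun hfij ⟨x, hx⟩)
    · simp only [ContinuousLinearMap.coe_coe, map_pow, ContinuousLinearMap.toLinearMap_pow,
        Module.End.pow_apply, Function.iterate_fixed (hfix x hx)]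
  refine ⟨j - i, Nat.sub_pos_of_lt hlt, ?_⟩
  rw [pow_sub α hlt.le, map_mul, ← heq, linearPart_mul_inv]

lemma exists_linearPart_near_one_inner_pos {Γ : Subgroup (AffG n)} (hΓ : Γ ≤ isometries n)
    {D : ℝ} (hcoc : ∀ x : Euc n, ∃ γ ∈ Γ, ‖γ 0 - x‖ ≤ D) {c : Euc n} (hc : c ≠ 0) :
    ∃ α ∈ Γ, ‖linearPart α - 1‖ ≤ 1 / 8 ∧ 0 < ⟪α 0, c⟫ := by
  obtain ⟨R, hR⟩ := exists_forall_exists_linearPart_near_one hΓ hcoc (ε := 1 / 8) (by norm_num)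
  have hc' : 0 < ‖c‖ := norm_pos_iff.mpr hc
  obtain ⟨α, hα, hα1, hαx⟩ := hR (((R + 1) / ‖c‖) • c)
  refine ⟨α, hα, hα1, ?_⟩
  have hx : ⟪((R + 1) / ‖c‖) • c, c⟫ = (R + 1) * ‖c‖ := by
    rw [real_inner_smul_left, real_inner_self_eq_norm_sq]
    field_simp
  have herr : -(R * ‖c‖) ≤ ⟪α 0 - ((R + 1) / ‖c‖) • c, c⟫ := by
    have := (abs_real_inner_le_norm (α 0 - ((R + 1) / ‖c‖) • c) c).trans
      (mul_le_mul_of_nonneg_right hαx hc'.le)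
    linarith [neg_abs_le ⟪α 0 - ((R + 1) / ‖c‖) • c, c⟫]
  have hsplit := inner_add_left (𝕜 := ℝ) (α 0 - ((R + 1) / ‖c‖) • c) (((R + 1) / ‖c‖) • c) c
  rw [sub_add_cancel, hx] at hsplit
  nlinarith

theorem spanOf_eq_top {Γ : Subgroup (AffG n)} (hΓ : Γ ≤ isometries n)
    (hfin : ∀ c : ℝ, {γ | γ ∈ Γ ∧ ‖γ 0‖ ≤ c}.Finite) {D : ℝ}
    (hcoc : ∀ x : Euc n, ∃ γ ∈ Γ, ‖γ 0 - x‖ ≤ D) : spanOf Γ = ⊤ := by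
  by_contra hU
  obtain ⟨c, hcU, hc0⟩ :=
    (Submodule.ne_bot_iff _).mp (mt Submodule.orthogonal_eq_bot_iff.mp hU)
  obtain ⟨α, hα, hα1, hpos⟩ := exists_linearPart_near_one_inner_pos hΓ hcoc hc0
  have hfix : ∀ w ∈ (spanOf Γ)ᗮ, linearPart α w = w := by
    intro w hw
    have h₁ : (linearPart α - 1) w ∈ spanOf Γ :=
      linearPart_sub_one_apply_mem_spanOf hΓ hcoc (isDiscrete_of_finite (hfin 1)) hα hα1 w
    have h₂ : (linearPart α - 1) w ∈ (spanOf Γ)ᗮ :=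
      Submodule.sub_mem _ (linearPart_mem_orthogonal_spanOf hΓ hα hw) hw
    have := (Submodule.orthogonal_disjoint (spanOf Γ)).le_bot ⟨h₁, h₂⟩
    rwa [Submodule.mem_bot, sub_apply, one_apply_eq_self, sub_eq_zero] at this
  obtain ⟨m, hm, hαm⟩ := exists_pow_linearPart_eq_one hΓ hfin hα hfix
  have ht : (α ^ m) 0 ∈ translations Γ := by
    rw [mem_translations, ← eq_transl_of_linearPart_eq_one hαm]
    exact pow_mem hα m
  have h0 := Submodule.inner_right_of_mem_orthogonal (Submodule.subset_span ht) hcU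
  rw [inner_pow_apply_zero (hΓ hα) (hfix c hcU)] at h0
  have : (0 : ℝ) < m := Nat.cast_pos.mpr hm
  nlinarith

/-! ### Elements of the normalizer near the identity -/

lemma norm_inv_mul_apply_zero {τ : AffG n} (hτ : τ ∈ isometries n) (ρ : AffG n) :
    ‖(τ⁻¹ * ρ) 0‖ = ‖ρ 0 - τ 0‖ := by
  rw [← norm_apply_sub_apply (inv_mem hτ), show τ⁻¹ (τ 0) = 0 from τ.symm_apply_apply 0, sub_zero]
  rfl

lemma exists_mem_closure_norm_apply_zero_sub_le {Γ : Subgroup (AffG n)} (hΓ : Γ ≤ isometries n)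
    {D : ℝ} (hcoc : ∀ x : Euc n, ∃ γ ∈ Γ, ‖γ 0 - x‖ ≤ D) (y : Euc n) :
    ∃ τ ∈ Subgroup.closure {σ | σ ∈ Γ ∧ ‖σ 0‖ ≤ 2 * D + 1}, ‖τ 0 - y‖ ≤ D := by
  set G := Subgroup.closure {σ | σ ∈ Γ ∧ ‖σ 0‖ ≤ 2 * D + 1}
  have hGΓ : G ≤ Γ := (Subgroup.closure_le Γ).mpr fun σ hσ => hσ.1
  have hstep : ∀ y y' : Euc n, ‖y - y'‖ ≤ 1 → (∃ τ ∈ G, ‖τ 0 - y‖ ≤ D) →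
      ∃ τ ∈ G, ‖τ 0 - y'‖ ≤ D := by
    rintro y y' hyy' ⟨τ, hτ, hτy⟩
    obtain ⟨ρ, hρ, hρy'⟩ := hcoc y'
    refine ⟨ρ, ?_, hρy'⟩
    have hσ : τ⁻¹ * ρ ∈ G := by
      refine Subgroup.subset_closure ⟨mul_mem (inv_mem (hGΓ hτ)) hρ, ?_⟩
      rw [norm_inv_mul_apply_zero (hΓ (hGΓ hτ))]
      calc ‖ρ 0 - τ 0‖ ≤ ‖ρ 0 - y'‖ + ‖y' - τ 0‖ := norm_sub_le_norm_sub_add_norm_sub _ _ _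
        _ ≤ ‖ρ 0 - y'‖ + (‖y' - y‖ + ‖y - τ 0‖) := by
            gcongr; exact norm_sub_le_norm_sub_add_norm_sub _ _ _
        _ ≤ D + (1 + D) := by rw [norm_sub_rev y' y, norm_sub_rev y (τ 0)]; gcongr
        _ = 2 * D + 1 := by ring
    simpa using mul_mem hτ hσ
  set N : ℕ := ⌈‖y‖⌉₊ + 1
  have hN : (0 : ℝ) < N := by positivity
  have hpath : ∀ i : ℕ, ∃ τ ∈ G, ‖τ 0 - ((i : ℝ) / N) • y‖ ≤ D := by
    intro i
    induction i with
    | zero =>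
      obtain ⟨γ, -, h⟩ := hcoc 0
      exact ⟨1, one_mem G, by simpa using (norm_nonneg _).trans h⟩
    | succ i ih =>
      refine hstep _ _ ?_ ih
      have hcoef : (i : ℝ) / N - ((i + 1 : ℕ) : ℝ) / N = -(N : ℝ)⁻¹ := by push_cast; ring
      rw [← sub_smul, norm_smul, hcoef, norm_neg, norm_inv, Real.norm_of_nonneg hN.le,
        inv_mul_le_iff₀ hN, mul_one]
      exact (Nat.le_ceil _).trans (by simp [N])
  simpa [hN.ne'] using hpath N

lemma le_closure_setOf_norm_apply_zero_le {Γ : Subgroup (AffG n)} (hΓ : Γ ≤ isometries n)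
    {D : ℝ} (hcoc : ∀ x : Euc n, ∃ γ ∈ Γ, ‖γ 0 - x‖ ≤ D) :
    Γ ≤ Subgroup.closure {σ | σ ∈ Γ ∧ ‖σ 0‖ ≤ 2 * D + 1} := by
  intro γ hγ
  obtain ⟨τ, hτ, hτγ⟩ := exists_mem_closure_norm_apply_zero_sub_le hΓ hcoc (γ 0)
  have hτΓ : τ ∈ Γ := (Subgroup.closure_le Γ).mpr (fun σ hσ => hσ.1) hτ
  have hσ : τ⁻¹ * γ ∈ Subgroup.closure {σ | σ ∈ Γ ∧ ‖σ 0‖ ≤ 2 * D + 1} := by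
    refine Subgroup.subset_closure ⟨mul_mem (inv_mem hτΓ) hγ, ?_⟩
    rw [norm_inv_mul_apply_zero (hΓ hτΓ), norm_sub_rev]
    linarith [norm_nonneg (τ 0 - γ 0)]
  simpa using mul_mem hτ hσ

lemma linearPart_eq_one_of_forall_commute {Γ : Subgroup (AffG n)} (hΓ : Γ ≤ isometries n)
    {D : ℝ} (hcoc : ∀ x : Euc n, ∃ γ ∈ Γ, ‖γ 0 - x‖ ≤ D) {h : AffG n}
    (hcomm : ∀ γ ∈ Γ, Commute h γ) : linearPart h = 1 := by
  have hdisp : ∀ x : Euc n, ‖h x - x‖ ≤ ‖linearPart h - 1‖ * D + ‖h 0‖ := by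
    intro x
    obtain ⟨γ, hγ, hγx⟩ := hcoc x
    set y := γ⁻¹ x
    have hx : x = γ y := (γ.apply_symm_apply x).symm
    have hy : ‖y‖ ≤ D := by
      rw [← sub_zero y, ← norm_apply_sub_apply (hΓ hγ), ← hx, norm_sub_rev]
      exact hγx
    have hhy : h y - y = (linearPart h - 1) y + h 0 := by
      rw [apply_eq_linearPart_add h y, sub_apply, one_apply_eq_self]
      abel
    calc ‖h x - x‖ = ‖γ (h y) - γ y‖ := by
          rw [hx, show h (γ y) = γ (h y) from congrArg (· y) (hcomm γ hγ).eq]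
      _ = ‖(linearPart h - 1) y + h 0‖ := by rw [norm_apply_sub_apply (hΓ hγ), hhy]
      _ ≤ ‖linearPart h - 1‖ * D + ‖h 0‖ := norm_add_le_of_le
          ((ContinuousLinearMap.le_opNorm _ _).trans (by gcongr)) le_rfl
  rw [← sub_eq_zero]
  refine ContinuousLinearMap.eq_zero_of_forall_norm_apply_le _
    (C := ‖linearPart h - 1‖ * D + ‖h 0‖ + ‖h 0‖) fun z => ?_
  have : (linearPart h - 1) z = (h z - z) - h 0 := by
    rw [apply_eq_linearPart_add h z, sub_apply, one_apply_eq_self]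
    abel
  rw [this]
  linarith [norm_sub_le (h z - z) (h 0), hdisp z]

lemma exists_invariant_translation {Γ : Subgroup (AffG n)} (hΓ : Γ ≤ isometries n)
    (hfin : ∀ c : ℝ, {γ | γ ∈ Γ ∧ ‖γ 0‖ ≤ c}.Finite) {t : Euc n} (ht : t ∈ translations Γ) :
    ∃ w ∈ translations Γ, (∀ γ ∈ Γ, linearPart γ w = w) ∧ ∃ k : ℕ, 0 < k ∧
      ∀ c : Euc n, (∀ γ ∈ Γ, linearPart γ c = c) → ⟪w, c⟫ = k * ⟪t, c⟫ := by
  have hOfin : {s | ∃ γ ∈ Γ, linearPart γ t = s}.Finite :=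
    (finite_translations (hfin ‖t‖)).subset <| by
      rintro _ ⟨γ, hγ, rfl⟩
      refine ⟨linearPart_mem_translations hγ ht, ?_⟩
      rw [Metric.mem_closedBall, dist_zero_right, norm_linearPart_apply (hΓ hγ)]
  set F := hOfin.toFinset
  have hmemF : ∀ {s}, s ∈ F ↔ ∃ γ ∈ Γ, linearPart γ t = s := hOfin.mem_toFinset
  have hmapsF : ∀ γ ∈ Γ, ∀ s ∈ F, linearPart γ s ∈ F := by
    intro γ hγ s hs
    obtain ⟨δ, hδ, rfl⟩ := hmemF.mp hs
    exact hmemF.mpr ⟨γ * δ, mul_mem hγ hδ, by rw [map_mul]; rfl⟩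
  refine ⟨∑ s ∈ F, s, AddSubgroup.sum_mem _ fun s hs => ?_, fun γ hγ => ?_, F.card,
    Finset.card_pos.mpr ⟨t, hmemF.mpr ⟨1, one_mem Γ, rfl⟩⟩, fun c hc => ?_⟩
  · obtain ⟨γ, hγ, rfl⟩ := hmemF.mp hs
    exact linearPart_mem_translations hγ ht
  · rw [map_sum]
    exact Finset.sum_nbij' (linearPart γ) (linearPart γ⁻¹) (hmapsF γ hγ)
      (hmapsF γ⁻¹ (inv_mem hγ)) (fun _ _ => linearPart_inv_apply_linearPart_apply γ _)
      (fun _ _ => linearPart_apply_linearPart_inv_apply γ _) fun _ _ => rfl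
  · rw [sum_inner, Finset.sum_congr rfl fun s hs => ?_, Finset.sum_const, nsmul_eq_mul]
    obtain ⟨γ, hγ, rfl⟩ := hmemF.mp hs
    conv_lhs => rw [← hc γ hγ]
    exact inner_linearPart_apply (hΓ hγ) t c

lemma eq_zero_of_forall_commute_transl {Γ : Subgroup (AffG n)} (hΓ : Γ ≤ isometries n)
    (hfin : ∀ c : ℝ, {γ | γ ∈ Γ ∧ ‖γ 0‖ ≤ c}.Finite) {D : ℝ}
    (hcoc : ∀ x : Euc n, ∃ γ ∈ Γ, ‖γ 0 - x‖ ≤ D)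
    (hcenter : ∀ g ∈ Γ, (∀ h ∈ Γ, g * h = h * g) → g = 1) {c : Euc n}
    (hc : ∀ γ ∈ Γ, Commute (transl c) γ) : c = 0 := by
  by_contra hc0
  obtain ⟨t, ht, htc⟩ := exists_mem_inner_ne_zero_of_span_eq_top (spanOf_eq_top hΓ hfin hcoc) hc0
  obtain ⟨w, hw, hwfix, k, hk, hwc⟩ := exists_invariant_translation hΓ hfin ht
  have hw0 : w = 0 := by
    have := hcenter (transl w) hw fun γ hγ => (commute_transl_iff.mpr (hwfix γ hγ)).eq
    rwa [← transl_zero, transl_injective.eq_iff] at this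
  have := hwc c fun γ hγ => commute_transl_iff.mp (hc γ hγ)
  rw [hw0, inner_zero_left, eq_comm, mul_eq_zero, Nat.cast_eq_zero] at this
  exact this.elim hk.ne' htc

lemma dist_toProd_commutator_le {α β : AffG n} (hα : α ∈ isometries n) (hβ : β ∈ isometries n) :
    dist (toProd ⁅α, β⁆) (toProd 1) ≤ (‖β 0‖ + 4) * dist (toProd α) (toProd 1) := by
  rw [dist_toProd_one, dist_toProd_one]
  have h₁ := le_max_left ‖α 0‖ ‖linearPart α - 1‖
  have h₂ := le_max_right ‖α 0‖ ‖linearPart α - 1‖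
  have hA := norm_nonneg (linearPart α - 1)
  have hB := norm_linearPart_sub_one_le_two hβ
  have hβ0 := norm_nonneg (β 0)
  have hα0 := norm_nonneg (α 0)
  refine max_le ?_ ?_
  · nlinarith [norm_commutator_apply_zero_le hα hβ, norm_nonneg (linearPart β - 1)]
  · nlinarith [norm_linearPart_commutator_sub_one_le hα hβ]

lemma isDiscrete_of_le_normalizer {Γ H : Subgroup (AffG n)} (hΓ : Γ ≤ isometries n)
    (hfin : ∀ c : ℝ, {γ | γ ∈ Γ ∧ ‖γ 0‖ ≤ c}.Finite) {D : ℝ}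
    (hcoc : ∀ x : Euc n, ∃ γ ∈ Γ, ‖γ 0 - x‖ ≤ D)
    (hcenter : ∀ g ∈ Γ, (∀ h ∈ Γ, g * h = h * g) → g = 1) (hH : H ≤ isometries n)
    (hHΓ : H ≤ Subgroup.normalizer (Γ : Set (AffG n))) : IsDiscrete H := by
  obtain ⟨ε, hε, hdΓ⟩ := isDiscrete_of_finite (hfin 1)
  have hD : 0 ≤ D := by
    obtain ⟨γ, -, h⟩ := hcoc 0
    exact (norm_nonneg _).trans h
  refine ⟨ε / (2 * D + 5), by positivity, fun h hh hdist => ?_⟩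
  have hgen : {σ | σ ∈ Γ ∧ ‖σ 0‖ ≤ 2 * D + 1} ⊆ Subgroup.centralizer {h} := by
    rintro σ ⟨hσ, hσ0⟩
    have hmem : ⁅h, σ⁆ ∈ Γ := by
      rw [commutatorElement_def]
      exact mul_mem ((Subgroup.mem_normalizer_iff.mp (hHΓ hh) σ).mp hσ) (inv_mem hσ)
    have hsmall : dist (toProd ⁅h, σ⁆) (toProd 1) < ε :=
      calc _ ≤ (‖σ 0‖ + 4) * dist (toProd h) (toProd 1) := dist_toProd_commutator_le (hH hh) (hΓ hσ)
        _ < (2 * D + 5) * (ε / (2 * D + 5)) :=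
            mul_lt_mul' (by linarith) hdist dist_nonneg (by positivity)
        _ = ε := mul_div_cancel₀ _ (by positivity)
    exact Subgroup.mem_centralizer_singleton_iff.mpr
      (commutatorElement_eq_one_iff_mul_comm.mp (hdΓ _ hmem hsmall)).symm
  have hcomm : ∀ γ ∈ Γ, Commute h γ := fun γ hγ =>
    (Subgroup.mem_centralizer_singleton_iff.mp
      ((Subgroup.closure_le _).mpr hgen (le_closure_setOf_norm_apply_zero_le hΓ hcoc hγ))).symm
  have hlin := linearPart_eq_one_of_forall_commute hΓ hcoc hcomm
  have h0 := eq_zero_of_forall_commute_transl hΓ hfin hcoc hcenter (c := h 0)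
    (by rwa [← eq_transl_of_linearPart_eq_one hlin])
  rw [eq_transl_of_linearPart_eq_one hlin, h0, transl_zero]

lemma finiteIndex_subgroupOf {Γ H : Subgroup (AffG n)} (hΓH : Γ ≤ H) (hH : H ≤ isometries n)
    (hfin : ∀ c : ℝ, {γ | γ ∈ H ∧ ‖γ 0‖ ≤ c}.Finite) {D : ℝ}
    (hcoc : ∀ x : Euc n, ∃ γ ∈ Γ, ‖γ 0 - x‖ ≤ D) : (Γ.subgroupOf H).FiniteIndex := by
  have : Finite {v | v ∈ H ∧ ‖v 0‖ ≤ D} := (hfin D).to_subtype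
  have hsurj : Function.Surjective fun v : {v | v ∈ H ∧ ‖v 0‖ ≤ D} =>
      (QuotientGroup.mk ⟨v, v.2.1⟩ : H ⧸ Γ.subgroupOf H) := by
    intro z
    obtain ⟨g, rfl⟩ := QuotientGroup.mk_surjective z
    obtain ⟨γ, hγ, hγg⟩ := hcoc ((g : AffG n)⁻¹ 0)
    refine ⟨⟨g * γ, mul_mem g.2 (hΓH hγ), ?_⟩, ?_⟩
    · simpa using (norm_inv_mul_apply_zero (inv_mem (hH g.2)) γ).trans_le hγg
    · rw [QuotientGroup.eq, Subgroup.mem_subgroupOf]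
      simpa using inv_mem hγ
  have := Finite.of_surjective _ hsurj
  exact Subgroup.finiteIndex_of_finite_quotient

end SpaceGroup

open SpaceGroup in
/-- Corollary 7: if `Z(Γ) = 1` then `Γ` has finite index in its normalizer `N_E(Γ)` in
`Isom(Eⁿ)`, and `N_E(Γ)` is itself an `n`-space group. -/
theorem stmt14 {n : ℕ} (Γ NE : Subgroup (AffG n)) (hΓ : IsSpaceGroup Γ)
    (hcenter : ∀ g ∈ Γ, (∀ h ∈ Γ, g * h = h * g) → g = 1)
    (hNE : ∀ f : AffG n, f ∈ NE ↔ Isometry (⇑f) ∧ ∀ g : AffG n, g ∈ Γ ↔ f * g * f⁻¹ ∈ Γ) :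
    (Γ.subgroupOf NE).FiniteIndex ∧ IsSpaceGroup NE := by
  obtain ⟨hΓI, hpd, hcoc⟩ := hΓ
  have hNEI : NE ≤ isometries n := fun f hf => ((hNE f).mp hf).1
  have hNEN : NE ≤ Subgroup.normalizer (Γ : Set (AffG n)) := fun f hf =>
    Subgroup.mem_normalizer_iff.mpr ((hNE f).mp hf).2
  have hΓNE : Γ ≤ NE := fun γ hγ =>
    (hNE γ).mpr ⟨hΓI γ hγ, Subgroup.mem_normalizer_iff.mp (Subgroup.le_normalizer hγ)⟩
  have hfinΓ := finite_of_properlyDiscontinuous hpd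
  obtain ⟨D, hD⟩ := exists_norm_apply_zero_sub_le_of_cocompact hΓI hcoc
  have hfinNE := finite_of_isDiscrete hNEI
    (isDiscrete_of_le_normalizer hΓI hfinΓ hD hcenter hNEI hNEN)
  refine ⟨finiteIndex_subgroupOf hΓNE hNEI hfinNE hD, hNEI,
    properlyDiscontinuous_of_finite hNEI hfinNE, ?_⟩
  obtain ⟨K, hK, hcover⟩ := hcoc
  exact ⟨K, hK, fun x => (hcover x).imp fun γ h => ⟨hΓNE h.1, h.2⟩⟩
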